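/- For any positive integers n1, n2, n3 ≥ 2, there is no resolving set of P_{n1}□P_{n2}□P_{n3} of cardinality 2; in particular, for each of the choices v = (n1−1,0,0), v = (n1−1,n2−1,0) and v = (n1−1,n2−1,n3−1), the set {(0,0,0), v} fails to resolve some pair of distinct vertices. -/
import Mathlib


/-- Vertices of the 3D grid `P_{n1} □ P_{n2} □ P_{n3}`. -/
abbrev GridV (n1 n2 n3 : ℕ) := Fin n1 × Fin n2 × Fin n3

/-- Graph distance in the 3D grid: the ℓ₁ (Manhattan) distance. -/
def gridDist {n1 n2 n3 : ℕ} (u v : GridV n1 n2 n3) : ℕ :=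
  ((u.1 : ℤ) - (v.1 : ℤ)).natAbs + ((u.2.1 : ℤ) - (v.2.1 : ℤ)).natAbs +
    ((u.2.2 : ℤ) - (v.2.2 : ℤ)).natAbs

/-- A vertex `w` resolves the pair `u`, `v`. -/
abbrev gridResolves {n1 n2 n3 : ℕ} (w u v : GridV n1 n2 n3) : Prop :=
  gridDist w u ≠ gridDist w v

/-- `S` is a resolving set for the 3D grid. -/
def IsResolvingSet {n1 n2 n3 : ℕ} (S : Set (GridV n1 n2 n3)) : Prop :=
  ∀ u v : GridV n1 n2 n3, u ≠ v → ∃ w ∈ S, gridResolves w u v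

/-- `S` is an `m`-resolving set: each pair of distinct vertices is resolved by
at least `m` vertices of `S`. -/
def IsKResolvingSet {n1 n2 n3 : ℕ} (m : ℕ) (S : Finset (GridV n1 n2 n3)) : Prop :=
  ∀ u v : GridV n1 n2 n3, u ≠ v →
    m ≤ (S.filter (fun w => gridResolves w u v)).card

/-- The metric dimension of the 3D grid. -/
noncomputable def gridMetricDim (n1 n2 n3 : ℕ) : ℕ :=
  sInf { m | ∃ S : Finset (GridV n1 n2 n3),
    IsResolvingSet (S : Set (GridV n1 n2 n3)) ∧ S.card = m }

/-- The `m`-metric dimension of the 3D grid. -/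
noncomputable def gridKMetricDim (m n1 n2 n3 : ℕ) : ℕ :=
  sInf { c | ∃ S : Finset (GridV n1 n2 n3), IsKResolvingSet m S ∧ S.card = c }

/-- `F(n1,n2,n3)`: the boundary vertices of the grid. -/
def gridBoundary (n1 n2 n3 : ℕ) : Finset (GridV n1 n2 n3) :=
  Finset.univ.filter (fun z =>
    z.1.val = 0 ∨ z.1.val = n1 - 1 ∨ z.2.1.val = 0 ∨ z.2.1.val = n2 - 1 ∨
    z.2.2.val = 0 ∨ z.2.2.val = n3 - 1)

/-- `α_M(n1,n2,n3) = min{n1(n2+n3−2), n2(n1+n3−2), n3(n1+n2−2)}`. -/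
def alphaM (n1 n2 n3 : ℕ) : ℕ :=
  min (n1 * (n2 + n3 - 2)) (min (n2 * (n1 + n3 - 2)) (n3 * (n1 + n2 - 2)))

/-- `α_m(n1,n2,n3) = 2(n1+n2+n3) − 8`. -/
def alpham (n1 n2 n3 : ℕ) : ℕ := 2 * (n1 + n2 + n3) - 8

lemma coordMove {n : ℕ} (hn : 2 ≤ n) (a b : Fin n) :
    ∃ c d : Fin n, c ≠ d ∧
      (((a : ℤ) - d).natAbs = ((a : ℤ) - c).natAbs + 1) ∧
      ((((b : ℤ) - d).natAbs = ((b : ℤ) - c).natAbs + 1) ∨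
       (((b : ℤ) - d).natAbs + 1 = ((b : ℤ) - c).natAbs)) := by
  have ha := a.isLt
  have hb := b.isLt
  by_cases hM : a.val < n - 1 ∧ b.val < n - 1
  · exact ⟨⟨max a.val b.val, by omega⟩, ⟨max a.val b.val + 1, by omega⟩,
      by simp [Fin.ext_iff], by simp [Fin.ext_iff]; omega, Or.inl (by simp [Fin.ext_iff]; omega)⟩
  · by_cases hm : 0 < a.val ∧ 0 < b.val
    · exact ⟨⟨min a.val b.val, by omega⟩, ⟨min a.val b.val - 1, by omega⟩,
        by simp [Fin.ext_iff]; omega, by simp [Fin.ext_iff]; omega,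
        Or.inl (by simp [Fin.ext_iff]; omega)⟩
    · by_cases h0 : a.val = 0
      · exact ⟨⟨0, by omega⟩, ⟨1, by omega⟩, by simp [Fin.ext_iff],
          by simp; omega, Or.inr (by simp; omega)⟩
      · exact ⟨⟨n - 1, by omega⟩, ⟨n - 2, by omega⟩, by simp [Fin.ext_iff]; omega,
          by simp; omega, Or.inr (by simp; omega)⟩

lemma unresolvedPair {n1 n2 n3 : ℕ} (h1 : 2 ≤ n1) (h2 : 2 ≤ n2) (h3 : 2 ≤ n3)
    (a b : GridV n1 n2 n3) :
    ∃ u v : GridV n1 n2 n3, u ≠ v ∧ gridDist a u = gridDist a v ∧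
      gridDist b u = gridDist b v := by
  obtain ⟨a1, a2, a3⟩ := a
  obtain ⟨b1, b2, b3⟩ := b
  obtain ⟨c1, d1, hne1, ha1, hb1⟩ := coordMove h1 a1 b1
  obtain ⟨c2, d2, hne2, ha2, hb2⟩ := coordMove h2 a2 b2
  obtain ⟨c3, d3, hne3, ha3, hb3⟩ := coordMove h3 a3 b3
  rcases hb1 with hb1 | hb1 <;> rcases hb2 with hb2 | hb2 <;> rcases hb3 with hb3 | hb3 <;>
    first
    | exact ⟨(d1, c2, c3), (c1, d2, c3),
        fun h => hne1 (congrArg Prod.fst h).symm,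
        by simp only [gridDist]; omega, by simp only [gridDist]; omega⟩
    | exact ⟨(d1, c2, c3), (c1, c2, d3),
        fun h => hne1 (congrArg Prod.fst h).symm,
        by simp only [gridDist]; omega, by simp only [gridDist]; omega⟩
    | exact ⟨(c1, d2, c3), (c1, c2, d3),
        fun h => hne2 (congrArg (fun p => p.2.1) h).symm,
        by simp only [gridDist]; omega, by simp only [gridDist]; omega⟩

lemma no_two_set {n1 n2 n3 : ℕ} (h1 : 2 ≤ n1) (h2 : 2 ≤ n2) (h3 : 2 ≤ n3)
    (a b : GridV n1 n2 n3) :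
    ¬ IsResolvingSet ({a, b} : Set (GridV n1 n2 n3)) := by
  intro hres
  obtain ⟨u, v, huv, hau, hbu⟩ := unresolvedPair h1 h2 h3 a b
  obtain ⟨w, hw, hr⟩ := hres u v huv
  simp only [Set.mem_insert_iff, Set.mem_singleton_iff] at hw
  rcases hw with rfl | rfl
  exacts [hr hau, hr hbu]

/-- No resolving set of the 3D grid has cardinality 2; in particular each of the sets
{(0,0,0), v} for v ∈ {(n1−1,0,0), (n1−1,n2−1,0), (n1−1,n2−1,n3−1)} fails to resolve
some pair of distinct vertices. -/
theorem grid3D_no_resolving_set_of_card_two (n1 n2 n3 : ℕ)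
    (h1 : 2 ≤ n1) (h2 : 2 ≤ n2) (h3 : 2 ≤ n3) :
    (∀ S : Finset (GridV n1 n2 n3), S.card = 2 →
      ¬ IsResolvingSet (S : Set (GridV n1 n2 n3))) ∧
    ¬ IsResolvingSet
      ({((⟨0, by omega⟩ : Fin n1), (⟨0, by omega⟩ : Fin n2), (⟨0, by omega⟩ : Fin n3)),
        ((⟨n1 - 1, by omega⟩ : Fin n1), (⟨0, by omega⟩ : Fin n2), (⟨0, by omega⟩ : Fin n3))} :
        Set (GridV n1 n2 n3)) ∧
    ¬ IsResolvingSet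
      ({((⟨0, by omega⟩ : Fin n1), (⟨0, by omega⟩ : Fin n2), (⟨0, by omega⟩ : Fin n3)),
        ((⟨n1 - 1, by omega⟩ : Fin n1), (⟨n2 - 1, by omega⟩ : Fin n2), (⟨0, by omega⟩ : Fin n3))} :
        Set (GridV n1 n2 n3)) ∧
    ¬ IsResolvingSet
      ({((⟨0, by omega⟩ : Fin n1), (⟨0, by omega⟩ : Fin n2), (⟨0, by omega⟩ : Fin n3)),
        ((⟨n1 - 1, by omega⟩ : Fin n1), (⟨n2 - 1, by omega⟩ : Fin n2), (⟨n3 - 1, by omega⟩ : Fin n3))} :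
        Set (GridV n1 n2 n3)) := by
  refine ⟨?_, no_two_set h1 h2 h3 _ _, no_two_set h1 h2 h3 _ _, no_two_set h1 h2 h3 _ _⟩
  intro S hS
  obtain ⟨a, b, hab, rfl⟩ := Finset.card_eq_two.mp hS
  simpa using no_two_set h1 h2 h3 a b
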